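/- If G is a graph in which each heavy vertex has at least three light neighbors, then for every heavy edge e of G, P(G) = P(G − e). -/

import Mathlib

/-!
Take a minimum path covering `H` of `G`; if it avoids the heavy edge `uv` it also covers `G − uv`.
Otherwise `u` has at most one `H`-neighbour besides the heavy `v`, so at least two light neighbours
`w` of `u` are not `H`-neighbours of `u`, and each of them is an end of its path in `H`. After
deleting `uv` from `H`, the vertex `u` is an end of a path whose other end is at most one of
these `w`; joining `u` to another one merges two paths, giving a path covering of `G − uv` with
no more paths than `H`.
-/

namespace PaperPC

open SimpleGraph

variable {V : Type*}

/-- The degree of a vertex, via the cardinality of its neighbor set. -/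
noncomputable def ndeg (G : SimpleGraph V) (v : V) : ℕ := (G.neighborSet v).ncard

/-- A linear forest: an acyclic graph of maximum degree at most 2,
i.e. a vertex-disjoint union of paths.  A spanning linear subforest of `G`
is exactly a path covering of `G` (isolated vertices are one-vertex paths). -/
def IsLinearForest (H : SimpleGraph V) : Prop :=
  H.IsAcyclic ∧ ∀ v, ndeg H v ≤ 2

/-- The number of paths of a path covering = number of connected components. -/
noncomputable def numPaths (H : SimpleGraph V) : ℕ := Nat.card H.ConnectedComponent

/-- The path covering number `P(G)`. -/
noncomputable def pathCoverNumber (G : SimpleGraph V) : ℕ :=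
  sInf {k | ∃ H ≤ G, IsLinearForest H ∧ numPaths H = k}

/-- `H` is a minimum path covering of `G`. -/
def IsMinPathCover (G H : SimpleGraph V) : Prop :=
  H ≤ G ∧ IsLinearForest H ∧ numPaths H = pathCoverNumber G

open scoped Classical in
/-- The path sequence of a path covering: the multiset of the numbers of vertices
of its paths (a multiset encodes the nondecreasing ordered sequence). -/
noncomputable def pathSeq [Fintype V] (H : SimpleGraph V) : Multiset ℕ :=
  (Finset.univ : Finset H.ConnectedComponent).val.map fun c => c.supp.ncard

/-- `G` admits a unique path sequence. -/
def UniquePathSequence [Fintype V] (G : SimpleGraph V) : Prop :=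
  ∀ H₁ H₂ : SimpleGraph V, IsMinPathCover G H₁ → IsMinPathCover G H₂ →
    pathSeq H₁ = pathSeq H₂

/-- Number of leaves (vertices of degree 1). -/
noncomputable def numLeaves (G : SimpleGraph V) : ℕ := {v | ndeg G v = 1}.ncard

/-- Number of heavy edges (edges both of whose endpoints have degree > 2). -/
noncomputable def numHeavyEdges (G : SimpleGraph V) : ℕ :=
  {e ∈ G.edgeSet | ∀ v ∈ e, 2 < ndeg G v}.ncard

/-- Number of edges. -/
noncomputable def numEdges (G : SimpleGraph V) : ℕ := G.edgeSet.ncard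

/-- A graph is 2-sparse if no two adjacent vertices both have degree > 2. -/
def TwoSparse (G : SimpleGraph V) : Prop :=
  ∀ u v, G.Adj u v → ndeg G u ≤ 2 ∨ ndeg G v ≤ 2

/-- `G` is a path graph. -/
def IsPathGraph (G : SimpleGraph V) : Prop := G.IsTree ∧ ∀ v, ndeg G v ≤ 2

/-- `G` is a cycle graph. -/
def IsCycleGraph (G : SimpleGraph V) : Prop := G.Connected ∧ ∀ v, ndeg G v = 2

/-- A generalized star: a tree with exactly one heavy vertex (the center) in which
all vines have the same number of vertices (equivalently, all leaves are at the same
distance from the center). -/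
def IsGenStar (G : SimpleGraph V) : Prop :=
  G.IsTree ∧ ∃ c k, 2 < ndeg G c ∧ (∀ v, v ≠ c → ndeg G v ≤ 2) ∧
    ∀ v, ndeg G v = 1 → G.dist c v = k

/-- An L(2,1)-labeling. -/
def IsL21Labeling (G : SimpleGraph V) (f : V → ℕ) : Prop :=
  (∀ u v, G.Adj u v → 2 ≤ Nat.dist (f u) (f v)) ∧
  (∀ u v, G.dist u v = 2 → 1 ≤ Nat.dist (f u) (f v))

/-- `λ(G)`: the least `k` such that `G` has an L(2,1)-labeling with labels in `{0,…,k}`. -/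
noncomputable def lambdaNum (G : SimpleGraph V) : ℕ :=
  sInf {k | ∃ f : V → ℕ, IsL21Labeling G f ∧ ∀ v, f v ≤ k}

/-- A λ-labeling: an L(2,1)-labeling with maximum label `λ(G)`. -/
def IsLambdaLabeling (G : SimpleGraph V) (f : V → ℕ) : Prop :=
  IsL21Labeling G f ∧ (∀ v, f v ≤ lambdaNum G) ∧ ∃ v, f v = lambdaNum G

/-- The set of holes of a labeling: unused labels `h` with `1 ≤ h ≤ λ(G) - 1`. -/
def labHoles (G : SimpleGraph V) (f : V → ℕ) : Set ℕ :=
  {h | 1 ≤ h ∧ h + 1 ≤ lambdaNum G ∧ ∀ v, f v ≠ h}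

/-- The hole index `ρ(G)`: minimum number of holes over all λ-labelings. -/
noncomputable def holeIndex (G : SimpleGraph V) : ℕ :=
  sInf {k | ∃ f : V → ℕ, IsLambdaLabeling G f ∧ (labHoles G f).ncard = k}

open scoped Classical in
/-- The island sequence of a labeling: the multiset of cardinalities of the maximal
intervals `[a,b]` of consecutive integers all used by the labeling. -/
noncomputable def islandSeq [Fintype V] (G : SimpleGraph V) (f : V → ℕ) : Multiset ℕ :=
  (((Finset.range (lambdaNum G + 1)) ×ˢ (Finset.range (lambdaNum G + 1))).filter
    (fun q => q.1 ≤ q.2 ∧ (∀ x ∈ Finset.Icc q.1 q.2, ∃ v, f v = x) ∧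
      (q.1 = 0 ∨ ∀ v, f v ≠ q.1 - 1) ∧ ∀ v, f v ≠ q.2 + 1)).val.map
    fun q => q.2 - q.1 + 1

/-- `G` admits (at least) two distinct island sequences. -/
def MultipleIslandSequences [Fintype V] (G : SimpleGraph V) : Prop :=
  ∃ f g : V → ℕ, IsLambdaLabeling G f ∧ IsLambdaLabeling G g ∧
    (labHoles G f).ncard = holeIndex G ∧ (labHoles G g).ncard = holeIndex G ∧
    islandSeq G f ≠ islandSeq G g

/-- A vine: a maximal path one of whose endpoints (`a`) is a leaf and all of whose
vertices are light.  Maximality: any light vertex adjacent to the other end already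
lies on the path. -/
def IsVine (G : SimpleGraph V) {a b : V} (p : G.Walk a b) : Prop :=
  p.IsPath ∧ ndeg G a = 1 ∧ (∀ v ∈ p.support, ndeg G v ≤ 2) ∧
  ∀ c, G.Adj b c → ndeg G c ≤ 2 → c ∈ p.support

/-- A vine with center `v`: the (heavy) vertex adjacent to the non-leaf end of the vine. -/
def IsVineWithCenter (G : SimpleGraph V) {a b : V} (p : G.Walk a b) (v : V) : Prop :=
  IsVine G p ∧ G.Adj b v ∧ 2 < ndeg G v

/-- The matching number of the subgraph of `G` induced by `S`. -/
noncomputable def matchingNumberOn (G : SimpleGraph V) (S : Set V) : ℕ :=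
  sSup {k | ∃ M : Set (Sym2 V), M ⊆ G.edgeSet ∧ (∀ e ∈ M, ∀ v ∈ e, v ∈ S) ∧
    (∀ e ∈ M, ∀ f ∈ M, e ≠ f → ∀ v, v ∈ e → v ∉ f) ∧ M.ncard = k}

/-- Labels used in the family `F`: `A`, or `B k` where `k` records the number of
vertices of each vine of the labeled generalized star that produced the label. -/
inductive Lab | A | B (k : ℕ)

/-- A labeled generalized star with center `c` whose vines have `k` vertices each
(equivalently, every leaf is at distance `k` from `c`); the degenerate case
`deg c = 2` is the convention regarding a path of length `2k` as a labeled
generalized star with two vines.  The neighbors of the center are labeled `B k`,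
the other non-leaf vertices (and the center) are labeled `A`, leaves are unlabeled. -/
def IsLGenStar {W : Type*} (H : SimpleGraph W) (c : W) (k : ℕ)
    (lab : W → Option Lab) : Prop :=
  H.IsTree ∧ 2 ≤ ndeg H c ∧ (∀ v, v ≠ c → ndeg H v ≤ 2) ∧
  (∀ v, ndeg H v = 1 → H.dist c v = k) ∧
  lab c = some Lab.A ∧
  (∀ v, H.Adj c v → lab v = some (Lab.B k)) ∧
  (∀ v, v ≠ c → ¬H.Adj c v → ndeg H v = 1 → lab v = none) ∧
  (∀ v, v ≠ c → ¬H.Adj c v → 2 ≤ ndeg H v → lab v = some Lab.A)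

/-- A labeled path: a path with at least three vertices, non-leaf vertices labeled `A`. -/
def IsLPath {W : Type*} (H : SimpleGraph W) (lab : W → Option Lab) : Prop :=
  H.IsTree ∧ (∀ v, ndeg H v ≤ 2) ∧ 3 ≤ Nat.card W ∧
  (∀ v, ndeg H v = 1 → lab v = none) ∧
  ∀ v, 2 ≤ ndeg H v → lab v = some Lab.A

/-- The induced subgraph of `T` on `s` is a labeled generalized star. -/
def LGenStarOn (T : SimpleGraph V) (s : Set V) (c : V) (k : ℕ)
    (lab : V → Option Lab) : Prop :=
  ∃ hc : c ∈ s, IsLGenStar (T.induce s) ⟨c, hc⟩ k fun v => lab v.1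

/-- The induced subgraph of `T` on `s` is a labeled path. -/
def LPathOn (T : SimpleGraph V) (s : Set V) (lab : V → Option Lab) : Prop :=
  IsLPath (T.induce s) fun v => lab v.1

/-- The family `F` of labeled trees, realized as induced subgraphs (on vertex sets `s`)
of an ambient graph `T`:  start from a labeled generalized star with at least three
vines or from a labeled path, and repeatedly attach, via a single new edge, a labeled
generalized star with at least three vines at a vertex labeled `A` (Type-1), a labeled
path by one of its non-leaf vertices at a vertex labeled `A` (Type-2), or a labeled
generalized star whose vines have the same number of vertices `k` as those of the star
that labeled `u` with `B k`, at a vertex `u` labeled `B k` (Type-3). -/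
inductive InF (T : SimpleGraph V) : Set V → (V → Option Lab) → Prop
  | base_star (s : Set V) (c : V) (k : ℕ) (lab : V → Option Lab) :
      LGenStarOn T s c k lab → 3 ≤ {w ∈ s | T.Adj c w}.ncard → InF T s lab
  | base_path (s : Set V) (lab : V → Option Lab) :
      LPathOn T s lab → InF T s lab
  | type1 (s : Set V) (lab : V → Option Lab) (t : Set V) (lab' : V → Option Lab)
      (u c : V) (k : ℕ) :
      InF T s lab → Disjoint s t → u ∈ s → c ∈ t → lab u = some Lab.A →
      LGenStarOn T t c k lab' → 3 ≤ {w ∈ t | T.Adj c w}.ncard →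
      (∀ x ∈ s, ∀ y ∈ t, (T.Adj x y ↔ x = u ∧ y = c)) →
      (∀ x ∈ s, lab' x = lab x) →
      InF T (s ∪ t) lab'
  | type2 (s : Set V) (lab : V → Option Lab) (t : Set V) (lab' : V → Option Lab)
      (u v : V) :
      InF T s lab → Disjoint s t → u ∈ s → v ∈ t → lab u = some Lab.A →
      LPathOn T t lab' → 2 ≤ {w ∈ t | T.Adj v w}.ncard →
      (∀ x ∈ s, ∀ y ∈ t, (T.Adj x y ↔ x = u ∧ y = v)) →
      (∀ x ∈ s, lab' x = lab x) →
      InF T (s ∪ t) lab'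
  | type3 (s : Set V) (lab : V → Option Lab) (t : Set V) (lab' : V → Option Lab)
      (u c : V) (k : ℕ) :
      InF T s lab → Disjoint s t → u ∈ s → c ∈ t → lab u = some (Lab.B k) →
      LGenStarOn T t c k lab' →
      (∀ x ∈ s, ∀ y ∈ t, (T.Adj x y ↔ x = u ∧ y = c)) →
      (∀ x ∈ s, lab' x = lab x) →
      InF T (s ∪ t) lab'

/-- `G` is obtained from the tree `T` by expanding each edge of `T` into a complete
graph of arbitrary order: there is an embedding `ι` of the vertices of `T` and an
assignment `b` of a block of vertices of `G` to each edge of `T` such that an original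
vertex lies in the block of an edge iff it is an endpoint of that edge, blocks of
distinct edges meet only in original vertices, every vertex of `G` lies in some block,
and two distinct vertices of `G` are adjacent iff they lie in a common block. -/
def IsBlockExpansion {U W : Type*} (T : SimpleGraph U) (G : SimpleGraph W) : Prop :=
  ∃ (ι : U ↪ W) (b : Sym2 U → Set W),
    (∀ (u : U), ∀ e ∈ T.edgeSet, (ι u ∈ b e ↔ u ∈ e)) ∧
    (∀ e ∈ T.edgeSet, ∀ f ∈ T.edgeSet, e ≠ f → b e ∩ b f ⊆ Set.range ι) ∧
    (∀ w : W, ∃ e ∈ T.edgeSet, w ∈ b e) ∧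
    (∀ x y : W, G.Adj x y ↔ x ≠ y ∧ ∃ e ∈ T.edgeSet, x ∈ b e ∧ y ∈ b e)

section Degree

variable {G H : SimpleGraph V}

lemma ndeg_mono [Finite V] (h : H ≤ G) (v : V) : ndeg H v ≤ ndeg G v :=
  Set.ncard_le_ncard fun _ hw => h hw

lemma ndeg_lt_ndeg_of_adj_of_not_adj [Finite V] (h : H ≤ G) {v w : V} (hG : G.Adj v w)
    (hH : ¬H.Adj v w) : ndeg H v < ndeg G v :=
  Set.ncard_lt_ncard ⟨fun _ hx => h hx, fun hsub => hH (hsub hG)⟩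

lemma ndeg_sup_le (G H : SimpleGraph V) (v : V) : ndeg (G ⊔ H) v ≤ ndeg G v + ndeg H v := by
  rw [ndeg, neighborSet_sup]
  exact Set.ncard_union_le _ _

lemma ndeg_edge_le_one [Finite V] (u w v : V) : ndeg (edge u w) v ≤ 1 := by
  refine (Set.ncard_le_one).2 fun a ha b hb => ?_
  rw [mem_neighborSet, edge_adj] at ha hb
  grind

lemma ndeg_edge_of_ne {u w v : V} (hu : v ≠ u) (hw : v ≠ w) : ndeg (edge u w) v = 0 := by
  have : (edge u w).neighborSet v = ∅ := Set.eq_empty_of_forall_notMem fun a ha => by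
    rw [mem_neighborSet, edge_adj] at ha
    grind
  rw [ndeg, this, Set.ncard_empty]

end Degree

section Walk

open Walk

variable {G : SimpleGraph V} {a b : V} {p : G.Walk a b}

lemma _root_.SimpleGraph.Walk.IsPath.ncard_neighborSet_toSubgraph_eq_two (hp : p.IsPath)
    {x : V} (hx : x ∈ p.support) (hxa : x ≠ a) (hxb : x ≠ b) :
    (p.toSubgraph.neighborSet x).ncard = 2 := by
  obtain ⟨i, rfl, hi⟩ := mem_support_iff_exists_getVert.1 hx
  refine hp.ncard_neighborSet_toSubgraph_internal_eq_two (fun h => hxa ?_) (lt_of_le_of_ne hi ?_)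
  · rw [h, getVert_zero]
  · rintro rfl
    exact hxb p.getVert_length

lemma _root_.SimpleGraph.Walk.IsPath.mem_support_of_adj [Finite V] (hdeg : ∀ x, ndeg G x ≤ 2)
    (hp : p.IsPath) (hab : a ≠ b) (ha : ndeg G a ≤ 1) (hb : ndeg G b ≤ 1) {x y : V}
    (hx : x ∈ p.support) (hxy : G.Adj x y) : y ∈ p.support := by
  have hnil : ¬p.Nil := not_nil_of_ne hab
  have hle : ndeg G x ≤ (p.toSubgraph.neighborSet x).ncard := by
    by_cases hxa : x = a
    · subst hxa
      rw [hp.neighborSet_toSubgraph_startpoint hnil, Set.ncard_singleton]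
      exact ha
    by_cases hxb : x = b
    · subst hxb
      rw [hp.neighborSet_toSubgraph_endpoint hnil, Set.ncard_singleton]
      exact hb
    rw [hp.ncard_neighborSet_toSubgraph_eq_two hx hxa hxb]
    exact hdeg x
  have heq := Set.eq_of_subset_of_ncard_le (p.toSubgraph.neighborSet_subset x) hle
  rw [← mem_verts_toSubgraph]
  exact Subgraph.Adj.snd_mem (show y ∈ p.toSubgraph.neighborSet x from heq ▸ hxy)

lemma _root_.SimpleGraph.Walk.IsPath.mem_support_of_reachable [Finite V]
    (hdeg : ∀ x, ndeg G x ≤ 2) (hp : p.IsPath) (hab : a ≠ b) (ha : ndeg G a ≤ 1)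
    (hb : ndeg G b ≤ 1) {x : V} (hx : G.Reachable a x) : x ∈ p.support := by
  rw [reachable_iff_reflTransGen] at hx
  induction hx with
  | refl => exact p.start_mem_support
  | tail _ hyz ih => exact hp.mem_support_of_adj hdeg hab ha hb ih hyz

end Walk

lemma eq_or_eq_of_reachable_of_ndeg_le_one [Finite V] {G : SimpleGraph V}
    (hdeg : ∀ x, ndeg G x ≤ 2) {a b x : V} (hab : a ≠ b) (ha : ndeg G a ≤ 1)
    (hb : ndeg G b ≤ 1) (hx : ndeg G x ≤ 1) (hrb : G.Reachable a b) (hrx : G.Reachable a x) :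
    x = a ∨ x = b := by
  by_contra! hxab
  obtain ⟨p, hp⟩ := hrb.exists_isPath
  have hxp := hp.mem_support_of_reachable hdeg hab ha hb hrx
  have h2 := hp.ncard_neighborSet_toSubgraph_eq_two hxp hxab.1 hxab.2
  have := Set.ncard_le_ncard (p.toSubgraph.neighborSet_subset x)
  rw [ndeg] at hx
  omega

section SupEdge

variable {K : SimpleGraph V} {u v : V}

lemma reachable_or_of_reachable_sup_edge {x y : V} (h : (K ⊔ edge u v).Reachable x y) :
    K.Reachable x y ∨ K.Reachable x u ∧ K.Reachable v y ∨
      K.Reachable x v ∧ K.Reachable u y := by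
  rw [reachable_iff_reflTransGen] at h
  induction h with
  | refl => exact Or.inl .rfl
  | tail _ hyz ih =>
    rcases hyz with hyz | hyz
    · grind [Adj.reachable, Reachable.trans]
    · rw [edge_adj] at hyz
      grind [Reachable.refl, Reachable.symm]

lemma card_connectedComponent_le_card_sup_edge_add_one [Finite V] (K : SimpleGraph V)
    (u v : V) :
    Nat.card K.ConnectedComponent ≤ Nat.card (K ⊔ edge u v).ConnectedComponent + 1 := by
  classical
  let φ := ConnectedComponent.map (Hom.ofLE (le_sup_left : K ≤ K ⊔ edge u v))
  let f (c : K.ConnectedComponent) : Option (K ⊔ edge u v).ConnectedComponent :=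
    if c = K.connectedComponentMk v then none else some (φ c)
  have hf : Function.Injective f := by
    refine ConnectedComponent.ind₂ fun x y hxy => ?_
    simp only [f, φ, ConnectedComponent.map_mk] at hxy
    split_ifs at hxy with hx hy hy
    · rw [hx, hy]
    simp only [Option.some_inj, Hom.coe_ofLE, id_eq, ConnectedComponent.eq] at hxy hx hy ⊢
    rcases reachable_or_of_reachable_sup_edge hxy with h | ⟨-, h⟩ | ⟨h, -⟩
    · exact h
    · exact absurd h.symm hy
    · exact absurd h hx
  simpa using Nat.card_le_card_of_injective f hf

lemma card_connectedComponent_sup_edge_lt [Finite V] (huv : ¬K.Reachable u v) :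
    Nat.card (K ⊔ edge u v).ConnectedComponent < Nat.card K.ConnectedComponent := by
  by_contra! h
  have hinj := ((ConnectedComponent.surjective_map_ofLE le_sup_left).bijective_of_nat_card_le h).1
  refine huv (ConnectedComponent.exact (hinj ?_))
  simp only [ConnectedComponent.map_mk, Hom.coe_ofLE, id_eq, ConnectedComponent.eq]
  exact Adj.reachable <|
    Or.inr ((edge_adj ..).2 ⟨Or.inl ⟨rfl, rfl⟩, fun h => huv (h ▸ .rfl)⟩)

end SupEdge

lemma deleteEdges_sup_edge {H : SimpleGraph V} {u v : V} (h : H.Adj u v) :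
    H.deleteEdges {s(u, v)} ⊔ edge u v = H := by
  rw [← edgeSet_inj, edgeSet_sup, edgeSet_deleteEdges, edgeSet_edge_of_ne h.ne]
  exact Set.sdiff_union_of_subset (Set.singleton_subset_iff.2 h)

section PathCover

variable {G H K : SimpleGraph V}

lemma IsLinearForest.sup_edge [Finite V] (hK : IsLinearForest K) {u w : V}
    (hr : ¬K.Reachable u w) (hu : ndeg K u ≤ 1) (hw : ndeg K w ≤ 1) :
    IsLinearForest (K ⊔ edge u w) := by
  refine ⟨hK.1.sup_edge_of_not_reachable hr, fun x => (ndeg_sup_le K _ x).trans ?_⟩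
  by_cases hx : x = u ∨ x = w
  · have := ndeg_edge_le_one u w x
    rcases hx with rfl | rfl <;> omega
  · push Not at hx
    rw [ndeg_edge_of_ne hx.1 hx.2]
    exact hK.2 x

lemma isLinearForest_bot : IsLinearForest (⊥ : SimpleGraph V) :=
  ⟨isAcyclic_bot, fun v => by simp [ndeg]⟩

lemma pathCoverNumber_le_numPaths (hHG : H ≤ G) (hH : IsLinearForest H) :
    pathCoverNumber G ≤ numPaths H :=
  Nat.sInf_le ⟨H, hHG, hH, rfl⟩

lemma exists_isMinPathCover (G : SimpleGraph V) : ∃ H, IsMinPathCover G H := by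
  obtain ⟨H, hHG, hH, hnum⟩ :
      pathCoverNumber G ∈ {k | ∃ H ≤ G, IsLinearForest H ∧ numPaths H = k} :=
    Nat.sInf_mem ⟨_, ⊥, bot_le, isLinearForest_bot, rfl⟩
  exact ⟨H, hHG, hH, hnum⟩

lemma pathCoverNumber_anti {G' : SimpleGraph V} (h : G' ≤ G) :
    pathCoverNumber G ≤ pathCoverNumber G' := by
  obtain ⟨H, hHG', hH, hnum⟩ := exists_isMinPathCover G'
  exact hnum ▸ pathCoverNumber_le_numPaths (hHG'.trans h) hH

lemma IsLinearForest.exists_exchange [Finite V] (hH : IsLinearForest H) {u v : V}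
    (huv : H.Adj u v) {S : Set V} (hS : 1 < S.ncard) (hSu : u ∉ S)
    (hSdeg : ∀ w ∈ S, ndeg H w ≤ 1) :
    ∃ w ∈ S, IsLinearForest (H.deleteEdges {s(u, v)} ⊔ edge u w) ∧
      numPaths (H.deleteEdges {s(u, v)} ⊔ edge u w) ≤ numPaths H := by
  set K := H.deleteEdges {s(u, v)}
  have hKH : K ≤ H := deleteEdges_le _
  have hK : IsLinearForest K := ⟨hH.1.anti hKH, fun x => (ndeg_mono hKH x).trans (hH.2 x)⟩
  have hKu : ndeg K u ≤ 1 := by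
    have := ndeg_lt_ndeg_of_adj_of_not_adj hKH huv (by simp [K])
    have := hH.2 u
    omega
  have hKS : ∀ w ∈ S, ndeg K w ≤ 1 := fun w hw => (ndeg_mono hKH w).trans (hSdeg w hw)
  obtain ⟨w, hwS, hr⟩ : ∃ w ∈ S, ¬K.Reachable u w := by
    obtain ⟨w₁, hw₁, w₂, hw₂, h₁₂⟩ := (Set.one_lt_ncard).1 hS
    by_contra! h
    rcases eq_or_eq_of_reachable_of_ndeg_le_one hK.2 (ne_of_mem_of_not_mem hw₁ hSu).symm hKu
      (hKS w₁ hw₁) (hKS w₂ hw₂) (h w₁ hw₁) (h w₂ hw₂) with rfl | rfl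
    · exact hSu hw₂
    · exact h₁₂ rfl
  refine ⟨w, hwS, hK.sup_edge hr hKu (hKS w hwS), ?_⟩
  have hlt := card_connectedComponent_sup_edge_lt hr
  have hle := card_connectedComponent_le_card_sup_edge_add_one K u v
  rw [deleteEdges_sup_edge huv] at hle
  unfold numPaths
  omega

end PathCover

lemma one_lt_ncard_light_neighbors_sdiff [Finite V] {G H : SimpleGraph V} {u v : V}
    (hHu : ndeg H u ≤ 2) (huv : H.Adj u v) (hv : 2 < ndeg G v)
    (hu : 3 ≤ {w | G.Adj u w ∧ ndeg G w ≤ 2}.ncard) :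
    1 < ({w | G.Adj u w ∧ ndeg G w ≤ 2} \ H.neighborSet u).ncard := by
  have hdiff : {w | G.Adj u w ∧ ndeg G w ≤ 2} \ H.neighborSet u =
      {w | G.Adj u w ∧ ndeg G w ≤ 2} \ (H.neighborSet u \ {v}) := by
    ext w
    simp only [Set.mem_sdiff, Set.mem_ofPred_eq, Set.mem_singleton_iff]
    grind
  have := Set.le_ncard_sdiff (H.neighborSet u \ {v}) {w | G.Adj u w ∧ ndeg G w ≤ 2}
  rw [Set.ncard_sdiff_singleton_of_mem (show v ∈ H.neighborSet u from huv)] at this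
  rw [hdiff]
  unfold ndeg at hHu
  omega

theorem deleteHeavyEdge_pathCoverNumber_general {V : Type*} [Fintype V] (G : SimpleGraph V)
    (hh : ∀ v, 2 < ndeg G v → 3 ≤ {w | G.Adj v w ∧ ndeg G w ≤ 2}.ncard)
    (e : Sym2 V) (hheavy : ∀ v ∈ e, 2 < ndeg G v) :
    pathCoverNumber G = pathCoverNumber (G.deleteEdges {e}) := by
  refine le_antisymm (pathCoverNumber_anti (deleteEdges_le _)) ?_
  obtain ⟨H, hHG, hH, hnum⟩ := exists_isMinPathCover G
  rw [← hnum]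
  induction e using Sym2.ind with | _ u v => ?_
  have hu := hheavy u (Sym2.mem_mk_left u v)
  have hv := hheavy v (Sym2.mem_mk_right u v)
  by_cases huv : H.Adj u v
  · obtain ⟨w, ⟨⟨hGuw, hw⟩, hHuw⟩, hH', hle⟩ := hH.exists_exchange huv
      (one_lt_ncard_light_neighbors_sdiff (hH.2 u) huv hv (hh u hu)) (fun h => G.irrefl h.1.1)
      fun w ⟨⟨hGuw, hw⟩, hHuw⟩ => by
        have := ndeg_lt_ndeg_of_adj_of_not_adj hHG hGuw.symm (mt H.adj_symm hHuw)
        omega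
    have hwv : w ≠ v := by rintro rfl; omega
    refine (pathCoverNumber_le_numPaths (sup_le (deleteEdges_mono hHG) ?_) hH').trans hle
    exact (edge_le_iff _).2 (Or.inr ((deleteEdges_adj).2 ⟨hGuw, by simpa [huv.ne] using hwv⟩))
  · refine pathCoverNumber_le_numPaths (le_trans ?_ (deleteEdges_mono hHG)) hH
    exact (deleteEdges_eq_self.2 (Set.disjoint_singleton_right.2 huv)).ge

/-- **Lemma (Statement 13).** If each heavy vertex of `G` has at least three light
neighbors, then for every heavy edge `e` of `G`, `P(G) = P(G − e)`. -/
theorem deleteHeavyEdge_pathCoverNumber {V : Type*} [Fintype V] (G : SimpleGraph V)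
    (hh : ∀ v, 2 < ndeg G v → 3 ≤ {w | G.Adj v w ∧ ndeg G w ≤ 2}.ncard)
    (e : Sym2 V) (he : e ∈ G.edgeSet) (hheavy : ∀ v ∈ e, 2 < ndeg G v) :
    pathCoverNumber G = pathCoverNumber (G.deleteEdges {e}) :=
  deleteHeavyEdge_pathCoverNumber_general G hh e hheavy

end PaperPC
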